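/- arXiv:0902.3110 — 7 statements merged into one kernel-verified Lean document; each statement's English description precedes it below -/
import Mathlib

section
/- Let R be a commutative ring of prime characteristic p, let u ∈ R, and let J, A be ideals of R with u·J ⊆ J^[p] (where J^[p] denotes the ideal generated by p-th powers of elements of J). If R is regular (or more generally if Frobenius powers commute with colon ideals, i.e. (J^[p] : A^[p]) = (J : A)^[p]), then u·(J : A) ⊆ (J : A)^[p]. -/
/-! For `x ∈ (J : A)` and `a ∈ A`, the element `u x a^q = u (x a) a^(q-1)` lies in `I`
as soon as `u J ⊆ I`; taking `I = J^[q]` gives `u (J : A) ⊆ (J^[q] : A^[q])`, which is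
`(J : A)^[q]` when Frobenius powers commute with colons. -/

/-- The `q`-th Frobenius power of an ideal: the ideal generated by `q`-th powers of its
elements.  For `q = p^e` this is the usual bracket power `J^[p^e]`. -/
def fpow {R : Type*} [CommRing R] (q : ℕ) (J : Ideal R) : Ideal R :=
  Ideal.span ((fun a => a ^ q) '' (J : Set R))

theorem mem_colon_fpow_iff {R : Type*} [CommRing R] {q : ℕ} {I A : Ideal R} {r : R} :
    r ∈ I.colon (fpow q A) ↔ ∀ a ∈ A, r * a ^ q ∈ I := by
  simp only [fpow, Ideal.colon_span, Submodule.mem_colon, Set.forall_mem_image, smul_eq_mul,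
    SetLike.mem_coe]

theorem mul_mem_colon_fpow {R : Type*} [CommRing R] {q : ℕ} (hq : q ≠ 0) {u x : R}
    {I J A : Ideal R} (hu : ∀ y ∈ J, u * y ∈ I) (hx : x ∈ J.colon A) :
    u * x ∈ I.colon (fpow q A) := by
  refine mem_colon_fpow_iff.mpr fun a ha => ?_
  have hxa : x * a ∈ J := by simpa using Submodule.mem_colon.mp hx a ha
  obtain ⟨k, rfl⟩ := Nat.exists_eq_succ_of_ne_zero hq
  have key : u * x * a ^ (k + 1) = u * (x * a) * a ^ k := by ring
  exact key ▸ I.mul_mem_right _ (hu _ hxa)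

theorem stmt_0_general {R : Type*} [CommRing R] (p : ℕ) (hp : p.Prime)
    (u : R) (J A : Ideal R)
    (hu : ∀ x ∈ J, u * x ∈ fpow p J)
    (hcolon : (fpow p J).colon (fpow p A) = fpow p (J.colon A)) :
    ∀ x ∈ J.colon A, u * x ∈ fpow p (J.colon A) :=
  fun _ hx => hcolon ▸ mul_mem_colon_fpow hp.ne_zero hu hx

theorem stmt_0 {R : Type*} [CommRing R] (p : ℕ) (hp : p.Prime) [CharP R p]
    (u : R) (J A : Ideal R)
    (hu : ∀ x ∈ J, u * x ∈ fpow p J)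
    (hcolon : (fpow p J).colon (fpow p A) = fpow p (J.colon A)) :
    ∀ x ∈ J.colon A, u * x ∈ fpow p (J.colon A) :=
  stmt_0_general p hp u J A hu hcolon
end

section
/- Let R be a commutative ring of prime characteristic p, u ∈ R, and J an ideal with u·J ⊆ J^[p]. Suppose J has a minimal primary decomposition J = Q_1 ∩ ... ∩ Q_n with P_i = √Q_i. If P_i is a minimal prime of J (not embedded), then Q_i = (J : a) for some a ∈ R, and hence u·Q_i ⊆ Q_i^[p] (assuming R is regular so that colon commutes with Frobenius powers). -/
/-- `ν_e = 1 + p + ... + p^{e-1}`. -/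
def nu (p e : ℕ) : ℕ := ∑ i ∈ Finset.range e, p ^ i

/-!
A primary component `Q i` at a minimal prime `P` of `J = ⋂ Q j` is the colon ideal `(J : a)` for
any `a ∉ P` lying in all other components; such an `a` exists because `P` is prime and, by
minimality, contains none of the other components. Multiplying `u · x·a ∈ J^[p]` by `a^(p-1)`
shows that `u` maps `(J : a)` into `(J^[p] : a^p) ⊆ (J^[p] : (a)^[p])`, which is `(J : a)^[p]`
when colons commute with Frobenius powers.
-/

namespace Ideal

variable {R : Type*} [CommRing R]

theorem IsPrimary.colon_span_singleton_eq {Q : Ideal R} (hQ : Q.IsPrimary) {a : R}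
    (ha : a ∉ Q.radical) : Q.colon (span {a}) = Q := by
  ext z
  rw [mem_colon_span_singleton]
  exact ⟨fun h => ((isPrimary_iff.mp hQ).2 h).resolve_right ha, fun h => Q.mul_mem_right a h⟩

theorem iInf_colon_span_singleton_eq {ι : Type*} (Q : ι → Ideal R) {i : ι}
    (hQ : (Q i).IsPrimary) {a : R} (haQ : ∀ j ≠ i, a ∈ Q j) (ha : a ∉ (Q i).radical) :
    (⨅ j, Q j).colon (span {a}) = Q i := by
  rw [Submodule.iInf_colon]
  refine le_antisymm ((iInf_le _ i).trans (hQ.colon_span_singleton_eq ha).le) (le_iInf fun j => ?_)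
  by_cases hj : j = i
  · subst hj
    exact (hQ.colon_span_singleton_eq ha).ge
  · exact le_top.trans ((Submodule.colon_eq_top_iff_subset _).mpr
      ((span_singleton_le_iff_mem _).mpr (haQ j hj))).ge

theorem radical_eq_of_le_of_mem_minimalPrimes {J I P : Ideal R} (hP : P ∈ J.minimalPrimes)
    (hI : I.radical.IsPrime) (hJI : J ≤ I) (hIP : I ≤ P) : I.radical = P :=
  have hradP : I.radical ≤ P := (hP.1.1.radical_le_iff).mpr hIP
  le_antisymm hradP (hP.2 ⟨hI, hJI.trans le_radical⟩ hradP)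

theorem exists_forall_ne_mem_and_notMem_radical {ι : Type*} [Fintype ι]
    [DecidableEq ι] {Q : ι → Ideal R} (hprimary : ∀ j, (Q j).IsPrimary)
    (hdistinct : Function.Injective fun j => (Q j).radical) {i : ι}
    (hmin : (Q i).radical ∈ (⨅ j, Q j).minimalPrimes) :
    ∃ a, (∀ j ≠ i, a ∈ Q j) ∧ a ∉ (Q i).radical := by
  by_contra! h
  have hinf : (Finset.univ.erase i).inf Q ≤ (Q i).radical := fun a ha =>
    h a fun j hj => Finset.inf_le (f := Q) (Finset.mem_erase.mpr ⟨hj, Finset.mem_univ j⟩) ha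
  obtain ⟨j, hj, hle⟩ := hmin.1.1.inf_le'.mp hinf
  exact (Finset.mem_erase.mp hj).1 <| hdistinct <|
    radical_eq_of_le_of_mem_minimalPrimes hmin (isPrime_radical (hprimary j)) (iInf_le Q j) hle

end Ideal

theorem fpow_span_singleton_le {R : Type*} [CommRing R] (q : ℕ) (a : R) :
    fpow q (Ideal.span {a}) ≤ Ideal.span {a ^ q} := by
  rw [fpow, Ideal.span_le]
  rintro _ ⟨b, hb, rfl⟩
  exact Ideal.mem_span_singleton.mpr (pow_dvd_pow_of_dvd (Ideal.mem_span_singleton.mp hb) q)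

theorem mul_mem_fpow_colon_span_singleton {R : Type*} [CommRing R] {p : ℕ} (hp : p ≠ 0)
    {u : R} {J : Ideal R} (hu : ∀ x ∈ J, u * x ∈ fpow p J) {a : R}
    (hcolon : (fpow p J).colon (fpow p (Ideal.span {a})) = fpow p (J.colon (Ideal.span {a}))) :
    ∀ x ∈ J.colon (Ideal.span {a}), u * x ∈ fpow p (J.colon (Ideal.span {a})) := by
  intro x hx
  rw [← hcolon]
  refine Submodule.colon_mono le_rfl (fpow_span_singleton_le p a) ?_
  rw [Ideal.mem_colon_span_singleton] at hx ⊢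
  obtain ⟨q, rfl⟩ := Nat.exists_eq_add_one_of_ne_zero hp
  rw [show u * x * a ^ (q + 1) = a ^ q * (u * (x * a)) by ring]
  exact Ideal.mul_mem_left _ _ (hu _ hx)

theorem stmt_2_general {R : Type*} [CommRing R] (p : ℕ) (hp : p.Prime)
    (u : R) (J : Ideal R)
    (hu : ∀ x ∈ J, u * x ∈ fpow p J)
    (n : ℕ) (Q : Fin n → Ideal R)
    (hprimary : ∀ j, (Q j).IsPrimary)
    (hdecomp : J = ⨅ j, Q j)
    (hdistinct : Function.Injective fun j => (Q j).radical)
    (i : Fin n)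
    (hmin : (Q i).radical ∈ J.minimalPrimes)
    (hcolon : ∀ a : R,
      (fpow p J).colon (fpow p (Ideal.span {a})) = fpow p (J.colon (Ideal.span {a}))) :
    (∃ a : R, Q i = J.colon (Ideal.span {a})) ∧
      ∀ x ∈ Q i, u * x ∈ fpow p (Q i) := by
  subst hdecomp
  obtain ⟨a, haQ, ha⟩ :=
    Ideal.exists_forall_ne_mem_and_notMem_radical hprimary hdistinct hmin
  have hQa := (Ideal.iInf_colon_span_singleton_eq Q (hprimary i) haQ ha).symm
  refine ⟨⟨a, hQa⟩, ?_⟩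
  rw [hQa]
  exact mul_mem_fpow_colon_span_singleton hp.ne_zero hu (hcolon a)

theorem stmt_2 {R : Type*} [CommRing R] (p : ℕ) (hp : p.Prime) [CharP R p]
    (u : R) (J : Ideal R)
    (hu : ∀ x ∈ J, u * x ∈ fpow p J)
    (n : ℕ) (Q : Fin n → Ideal R)
    (hprimary : ∀ j, (Q j).IsPrimary)
    (hdecomp : J = ⨅ j, Q j)
    (hirr : ∀ j, ¬ (⨅ k ∈ Finset.univ.erase j, Q k) ≤ Q j)
    (hdistinct : Function.Injective fun j => (Q j).radical)
    (i : Fin n)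
    (hmin : (Q i).radical ∈ J.minimalPrimes)
    (hcolon : ∀ a : R,
      (fpow p J).colon (fpow p (Ideal.span {a})) = fpow p (J.colon (Ideal.span {a}))) :
    (∃ a : R, Q i = J.colon (Ideal.span {a})) ∧
      ∀ x ∈ Q i, u * x ∈ fpow p (Q i) :=
  stmt_2_general p hp u J hu n Q hprimary hdecomp hdistinct i hmin hcolon
end

section
/- Let R be a regular commutative ring of prime characteristic p, let L ⊆ R be an ideal and u ∈ R. Writing ν_e = 1+p+...+p^{e−1}, we have for all e ≥ 1: u·(L^[p^e] : u^{ν_e}) ⊆ ((L^[p^{e−1}] : u^{ν_{e−1}}))^[p]. That is, multiplying the colon ideal (L^[p^e] : u^{ν_e}) by u lands in the p-th Frobenius power of the previous colon ideal. -/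
lemma nu_succ (p n : ℕ) : nu p (n + 1) = p * nu p n + 1 :=
  geom_sum_succ

lemma fpow_eq_map_frobenius {R : Type*} [CommRing R] (p : ℕ) [ExpChar R p] (J : Ideal R) :
    fpow p J = J.map (frobenius R p) :=
  rfl

lemma fpow_fpow {R : Type*} [CommRing R] (p : ℕ) [ExpChar R p] (q : ℕ) (J : Ideal R) :
    fpow p (fpow q J) = fpow (q * p) J := by
  rw [fpow_eq_map_frobenius, fpow, Ideal.map_span, ← Set.image_comp]
  simp only [fpow, Function.comp_def, frobenius_def, ← pow_mul]

theorem stmt_4 {R : Type*} [CommRing R] (p : ℕ) (hp : p.Prime) [CharP R p]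
    (u : R) (L : Ideal R)
    (hreg : ∀ (A : Ideal R) (v : R),
      (fpow p A).colon (Ideal.span {v ^ p}) = fpow p (A.colon (Ideal.span {v}))) :
    ∀ e : ℕ, 1 ≤ e →
      ∀ x ∈ (fpow (p ^ e) L).colon (Ideal.span {u ^ nu p e}),
        u * x ∈ fpow p ((fpow (p ^ (e - 1)) L).colon (Ideal.span {u ^ nu p (e - 1)})) := by
  have : Fact p.Prime := ⟨hp⟩
  intro e he x hx
  obtain ⟨n, rfl⟩ := Nat.exists_eq_add_of_le' he
  rw [Ideal.mem_colon_span_singleton] at hx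
  rw [Nat.add_sub_cancel, ← hreg, fpow_fpow, ← pow_succ, Ideal.mem_colon_span_singleton]
  have hpow : u * x * (u ^ nu p n) ^ p = x * u ^ nu p (n + 1) := by
    rw [nu_succ, pow_add, ← pow_mul]; ring
  rwa [hpow]
end

section
/- Let S be a ring of prime characteristic p and M an S[T; f]-module which is Artinian as an S-module. Then the descending chain of S-submodules {S·T^e M}_{e≥0} (the S-submodule generated by T^e M) stabilizes, and its stable value M* = ⋂_{e≥0} S T^e M satisfies S·T·M* = M* (i.e., M* is T-stable and T acts 'surjectively up to S-span' on M*). -/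
/-!
The chain `S T^e M` is descending, so it stabilizes at some `e₀` because `M` is Artinian, and its
intersection is `S T^{e₀} M`. Since `T (s m) = s^p T m`, the `S`-span of `T` applied to the
`S`-span of a set `X` is the `S`-span of `T X`; hence `S T (S T^e M) = S T^{e+1} M`, which at the
stable index `e₀` gives `S T M* = M*`.
-/

theorem Antitone.iInf_eq_of_forall_ge_eq {α : Type*} [CompleteLattice α] {f : ℕ → α}
    (hf : Antitone f) {n : ℕ} (hn : ∀ m, n ≤ m → f m = f n) : ⨅ m, f m = f n := by
  rw [← hf.iInf_nat_add n]
  simp only [fun m => hn (m + n) (Nat.le_add_left n m), iInf_const]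

theorem IsArtinian.exists_forall_ge_eq_of_antitone {R M : Type*} [Ring R] [AddCommGroup M]
    [Module R M] [IsArtinian R M] {f : ℕ → Submodule R M} (hf : Antitone f) :
    ∃ n, ∀ m, n ≤ m → f m = f n := by
  obtain ⟨n, hn⟩ := IsArtinian.monotone_stabilizes (R := R) ⟨OrderDual.toDual ∘ f, hf.dual_right⟩
  exact ⟨n, fun m hm => (hn m hm).symm⟩

namespace Submodule

variable {S M N : Type*} [Semiring S] [AddCommMonoid M] [Module S M]

theorem span_image_span_of_map_smul [AddCommMonoid N] [Module S N] {σ : S → S} {θ : M →+ N}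
    (hθ : ∀ (s : S) (m : M), θ (s • m) = σ s • θ m) (X : Set M) :
    span S (θ '' span S X) = span S (θ '' X) := by
  refine le_antisymm (span_le.mpr ?_) (span_mono (Set.image_mono subset_span))
  rintro _ ⟨m, hm, rfl⟩
  induction hm using span_induction with
  | mem x hx => exact subset_span ⟨x, hx, rfl⟩
  | zero => simp
  | add x y _ _ hx hy => rw [map_add]; exact add_mem hx hy
  | smul s x _ hx => rw [hθ]; exact smul_mem _ _ hx

theorem antitone_span_range_iterate (θ : M → M) :
    Antitone fun e => span S (Set.range θ^[e]) :=
  antitone_nat_of_succ_le fun e => span_mono <| by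
    rw [Function.iterate_succ]
    exact Set.range_comp_subset_range _ _

theorem span_range_iterate_succ {σ : S → S} {θ : M →+ M}
    (hθ : ∀ (s : S) (m : M), θ (s • m) = σ s • θ m) (e : ℕ) :
    span S (θ '' span S (Set.range (⇑θ)^[e])) = span S (Set.range (⇑θ)^[e + 1]) := by
  rw [span_image_span_of_map_smul hθ, Function.iterate_succ', Set.range_comp]

end Submodule

theorem stmt_12_general {S M : Type*} [CommRing S] [AddCommGroup M] [Module S M] [IsArtinian S M]
    (p : ℕ)
    (θ : M →+ M) (hθ : ∀ (s : S) (m : M), θ (s • m) = s ^ p • θ m) :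
    (∃ e₀ : ℕ, ∀ e : ℕ, e₀ ≤ e →
        Submodule.span S (Set.range (⇑θ)^[e]) = Submodule.span S (Set.range (⇑θ)^[e₀])) ∧
    Submodule.span S (⇑θ ''
        ((⨅ e : ℕ, Submodule.span S (Set.range (⇑θ)^[e]) : Submodule S M) : Set M)) =
      ⨅ e : ℕ, Submodule.span S (Set.range (⇑θ)^[e]) := by
  have hanti := Submodule.antitone_span_range_iterate (S := S) θ
  obtain ⟨e₀, hstab⟩ := IsArtinian.exists_forall_ge_eq_of_antitone hanti
  refine ⟨⟨e₀, hstab⟩, ?_⟩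
  rw [hanti.iInf_eq_of_forall_ge_eq hstab, Submodule.span_range_iterate_succ hθ, hstab _ e₀.le_succ]

theorem stmt_12 {S M : Type*} [CommRing S] [AddCommGroup M] [Module S M] [IsArtinian S M]
    (p : ℕ) (hp : p.Prime) [CharP S p]
    (θ : M →+ M) (hθ : ∀ (s : S) (m : M), θ (s • m) = s ^ p • θ m) :
    (∃ e₀ : ℕ, ∀ e : ℕ, e₀ ≤ e →
        Submodule.span S (Set.range (⇑θ)^[e]) = Submodule.span S (Set.range (⇑θ)^[e₀])) ∧
    Submodule.span S (⇑θ ''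
        ((⨅ e : ℕ, Submodule.span S (Set.range (⇑θ)^[e]) : Submodule S M) : Set M)) =
      ⨅ e : ℕ, Submodule.span S (Set.range (⇑θ)^[e]) :=
  stmt_12_general p θ hθ
end

section
/- Let S be a ring of prime characteristic p and M an S[T;f]-module that is Artinian over S. Write M_red = M/Nil(M) and M* = ⋂_{e≥0} S T^e M. Then (M_red)* ≅ (M*)_red as S[T;f]-modules; explicitly, for α sufficiently large, (S T^α M + Nil(M))/Nil(M) ≅ S T^α M / (Nil(M) ∩ S T^α M) and both chains stabilize to the same module. -/
theorem Submodule.antitone_span_range_iterate_s13 {R M : Type*} [Semiring R] [AddCommMonoid M]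
    [Module R M] (f : M → M) : Antitone fun e : ℕ => span R (Set.range f^[e]) :=
  antitone_nat_of_succ_le fun e => span_mono <| by
    rw [Function.iterate_succ]
    exact Set.range_comp_subset_range _ _

theorem IsArtinian.exists_forall_ge_eq_iInf {R M : Type*} [Semiring R] [AddCommMonoid M]
    [Module R M] [IsArtinian R M] {N : ℕ → Submodule R M} (hN : Antitone N) :
    ∃ n, ∀ m, n ≤ m → N m = ⨅ k, N k := by
  obtain ⟨n, hn⟩ := IsArtinian.monotone_stabilizes ⟨fun k => OrderDual.toDual (N k), hN⟩
  refine ⟨n, fun m hm => le_antisymm (le_iInf fun k => ?_) (iInf_le _ _)⟩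
  rcases le_total k m with hkm | hmk
  · exact hN hkm
  · exact (show N m = N k from (hn m hm).symm.trans (hn k (hm.trans hmk))).le

theorem stmt_13_general {S M : Type*} [CommRing S] [AddCommGroup M] [Module S M] [IsArtinian S M]
    (θ : M →+ M)
    -- `Nil` is the submodule of nilpotent elements `Nil(M)`:
    (Nil : Submodule S M) :
    ∃ α₀ : ℕ, ∀ α : ℕ, α₀ ≤ α →
      -- the chain `S T^α M` has stabilized to `M* = ⋂_e S T^e M`:
      (Submodule.span S (Set.range (⇑θ)^[α]) =
        ⨅ e : ℕ, Submodule.span S (Set.range (⇑θ)^[e])) ∧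
      -- the chain of images in `M_red` has also stabilized:
      (Submodule.span S (Set.range (⇑θ)^[α]) ⊔ Nil =
        Submodule.span S (Set.range (⇑θ)^[α₀]) ⊔ Nil) ∧
      -- `(S T^α M + Nil(M))/Nil(M) ≅ S T^α M / (Nil(M) ∩ S T^α M)`:
      Nonempty
        ((↥(Submodule.span S (Set.range (⇑θ)^[α]) ⊔ Nil) ⧸
            Submodule.comap (Submodule.span S (Set.range (⇑θ)^[α]) ⊔ Nil).subtype Nil) ≃ₗ[S]
          (↥(Submodule.span S (Set.range (⇑θ)^[α])) ⧸
            Submodule.comap (Submodule.span S (Set.range (⇑θ)^[α])).subtype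
              (Nil ⊓ Submodule.span S (Set.range (⇑θ)^[α])))) := by
  obtain ⟨α₀, hstable⟩ :=
    IsArtinian.exists_forall_ge_eq_iInf (Submodule.antitone_span_range_iterate_s13 (R := S) θ)
  refine ⟨α₀, fun α hα => ⟨hstable α hα, by rw [hstable α hα, hstable α₀ le_rfl], ?_⟩⟩
  rw [inf_comm]
  exact ⟨(LinearMap.quotientInfEquivSupQuotient _ Nil).symm⟩

theorem stmt_13 {S M : Type*} [CommRing S] [AddCommGroup M] [Module S M] [IsArtinian S M]
    (p : ℕ) (hp : p.Prime) [CharP S p]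
    (θ : M →+ M) (hθ : ∀ (s : S) (m : M), θ (s • m) = s ^ p • θ m)
    -- `Nil` is the submodule of nilpotent elements `Nil(M)`:
    (Nil : Submodule S M) (hNil : ∀ m : M, m ∈ Nil ↔ ∃ j : ℕ, (⇑θ)^[j] m = 0) :
    ∃ α₀ : ℕ, ∀ α : ℕ, α₀ ≤ α →
      -- the chain `S T^α M` has stabilized to `M* = ⋂_e S T^e M`:
      (Submodule.span S (Set.range (⇑θ)^[α]) =
        ⨅ e : ℕ, Submodule.span S (Set.range (⇑θ)^[e])) ∧
      -- the chain of images in `M_red` has also stabilized: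
      (Submodule.span S (Set.range (⇑θ)^[α]) ⊔ Nil =
        Submodule.span S (Set.range (⇑θ)^[α₀]) ⊔ Nil) ∧
      -- `(S T^α M + Nil(M))/Nil(M) ≅ S T^α M / (Nil(M) ∩ S T^α M)`:
      Nonempty
        ((↥(Submodule.span S (Set.range (⇑θ)^[α]) ⊔ Nil) ⧸
            Submodule.comap (Submodule.span S (Set.range (⇑θ)^[α]) ⊔ Nil).subtype Nil) ≃ₗ[S]
          (↥(Submodule.span S (Set.range (⇑θ)^[α])) ⧸
            Submodule.comap (Submodule.span S (Set.range (⇑θ)^[α])).subtype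
              (Nil ⊓ Submodule.span S (Set.range (⇑θ)^[α])))) :=
  stmt_13_general θ Nil
end

section
/- Let R be a complete regular local ring of characteristic p, I ⊆ R an ideal generated by a regular sequence g_1, ..., g_m, and set g = g_1···g_m. Then for all e ≥ 0, the colon ideal (I^[p^e] : I) equals g^{p^e−1}·R + I^[p^e]. -/
open Ideal IsLocalRing RingTheory.Sequence

theorem fpow_span {R : Type*} [CommRing R] (p : ℕ) [ExpChar R p] (e : ℕ) (S : Set R) :
    fpow (p ^ e) (span S) = span ((· ^ p ^ e) '' S) := by
  refine le_antisymm (span_le.mpr ?_) (span_mono (Set.image_mono subset_span))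
  rintro _ ⟨a, ha, rfl⟩
  simp only [SetLike.mem_coe]
  induction ha using Submodule.span_induction with
  | mem x hx => exact subset_span ⟨x, hx, rfl⟩
  | zero => simp [zero_pow (pow_ne_zero e (expChar_pos R p).ne')]
  | add x y _ _ hx hy => simpa only [add_pow_expChar_pow] using add_mem hx hy
  | smul r x _ hx => simpa only [smul_eq_mul, mul_pow] using mul_mem_left _ _ hx

theorem fpow_ofList {R : Type*} [CommRing R] (p : ℕ) [ExpChar R p] (e : ℕ) (l : List R) :
    fpow (p ^ e) (ofList l) = ofList (l.map (· ^ p ^ e)) := by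
  rw [fpow_span]
  congr 1
  ext
  simp

section

variable {R : Type*} [CommRing R]

theorem mem_sup_span_of_mul_mem_sup_span_mul {A : Ideal R} {a b v : R}
    (ha : IsSMulRegular (R ⧸ A) a) (h : v * a ∈ A ⊔ span {a * b}) : v ∈ A ⊔ span {b} := by
  obtain ⟨w, hw, _, hz, hvw⟩ := Submodule.mem_sup.mp h
  obtain ⟨c, rfl⟩ := mem_span_singleton'.mp hz
  have hv : v - c * b ∈ A := mem_of_isSMulRegular_quotient_of_smul_mem ha <| by
    rwa [smul_eq_mul, show a * (v - c * b) = w by linear_combination -hvw]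
  simpa using
    add_mem (mem_sup_left hv) (mem_sup_right (mul_mem_left _ c (mem_span_singleton_self b)))

namespace RingTheory.Sequence

theorem IsWeaklyRegular.isSMulRegular_quotient_ofList {rs : List R} {y : R}
    (h : IsWeaklyRegular R (rs ++ [y])) : IsSMulRegular (R ⧸ ofList rs) y := by
  rw [isWeaklyRegular_append_iff, isWeaklyRegular_singleton_iff, smul_eq_mul, mul_top] at h
  exact h.2

theorem IsRegular.mem_maximalIdeal [IsLocalRing R] {rs : List R} (h : IsRegular R rs)
    {r : R} (hr : r ∈ rs) : r ∈ maximalIdeal R := by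
  refine le_maximalIdeal (fun htop => h.top_ne_smul ?_) (subset_span (s := {r | r ∈ rs}) hr)
  rw [show ofList rs = ⊤ from htop, Submodule.top_smul]

variable [IsLocalRing R] [IsNoetherianRing R]

theorem IsRegular.append_pow_cons {ys xs : List R} {x : R} (h : IsRegular R (ys ++ x :: xs))
    {t : ℕ} (ht : t ≠ 0) : IsRegular R (ys ++ x ^ t :: xs) := by
  -- Move `x` to the end, where powering it is `IsSMulRegular.pow`, and back.
  have hlast : IsWeaklyRegular R (ys ++ xs ++ [x]) :=
    (IsLocalRing.isRegular_of_perm h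
      (by simpa using (List.perm_append_singleton x xs).symm.append_left ys)).toIsWeaklyRegular
  have hpow : IsWeaklyRegular R (ys ++ xs ++ [x ^ t]) := by
    rw [isWeaklyRegular_append_iff, isWeaklyRegular_singleton_iff] at hlast ⊢
    exact hlast.imp_right (·.pow t)
  refine IsLocalRing.isRegular_of_perm (rs := ys ++ xs ++ [x ^ t]) ?_
    (by simpa using (List.perm_append_singleton (x ^ t) xs).append_left ys)
  refine .of_isWeaklyRegular_of_mem_maximalIdeal R (fun r hr => ?_) hpow
  simp only [List.mem_append, List.mem_singleton] at hr
  rcases hr with (hr | hr) | rfl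
  · exact h.mem_maximalIdeal (by simp [hr])
  · exact h.mem_maximalIdeal (by simp [hr])
  · exact pow_mem_of_mem _ (h.mem_maximalIdeal (by simp)) t (Nat.pos_of_ne_zero ht)

theorem IsRegular.append_map_pow_append {t : ℕ} (ht : t ≠ 0) {zs : List R} :
    ∀ {ys xs : List R}, IsRegular R (ys ++ xs ++ zs) → IsRegular R (ys ++ xs.map (· ^ t) ++ zs)
  | _, [], h => h
  | ys, x :: xs, h => by
    have := IsRegular.append_map_pow_append ht (ys := ys ++ [x ^ t]) (xs := xs)
      (by simpa using IsRegular.append_pow_cons (xs := xs ++ zs) (by simpa using h) ht)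
    simpa using this

end RingTheory.Sequence

variable [IsLocalRing R] [IsNoetherianRing R]

theorem mem_sup_span_prod_pow_of_forall_mul_mem (s : ℕ) {zs xs : List R}
    (h : IsRegular R (zs ++ xs)) {u : R}
    (hu : ∀ x ∈ xs, u * x ∈ ofList zs ⊔ ofList (xs.map (· ^ (s + 1)))) :
    u ∈ ofList zs ⊔ ofList (xs.map (· ^ (s + 1))) ⊔ span {xs.prod ^ s} := by
  induction xs using List.reverseRecOn generalizing zs u with
  | nil => simp
  | append_singleton xs y ih =>
    set A := ofList zs ⊔ ofList (xs.map (· ^ (s + 1)))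
    have hsplit : ofList zs ⊔ ofList ((xs ++ [y]).map (· ^ (s + 1))) = A ⊔ span {y * y ^ s} := by
      simp [A, sup_assoc, pow_succ']
    rw [hsplit] at hu ⊢
    have hy : IsSMulRegular (R ⧸ A) y := by
      have := (IsRegular.append_map_pow_append (Nat.succ_ne_zero s) (ys := zs) (xs := xs)
        (zs := [y]) (by simpa using h)).toIsWeaklyRegular.isSMulRegular_quotient_ofList
      rwa [ofList_append] at this
    obtain ⟨w, hw, _, hc, rfl⟩ := Submodule.mem_sup.mp
      (mem_sup_span_of_mul_mem_sup_span_mul hy (hu y (by simp)))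
    obtain ⟨c, rfl⟩ := mem_span_singleton'.mp hc
    have hcx : ∀ x ∈ xs, c * x ∈ ofList (zs ++ [y]) ⊔ ofList (xs.map (· ^ (s + 1))) := by
      intro x hx
      have : c * x * y ^ s ∈ A ⊔ span {y ^ s * y} := by
        have := sub_mem (hu x (by simp [hx])) (mem_sup_left (mul_mem_right x _ hw))
        rw [mul_comm (y ^ s) y]
        convert this using 1
        ring
      simpa [ofList_singleton, A, sup_right_comm] using
        mem_sup_span_of_mul_mem_sup_span_mul (hy.pow s) this
    have hperm : IsRegular R (zs ++ [y] ++ xs) :=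
      IsLocalRing.isRegular_of_perm h
        (by simpa using (List.perm_append_singleton y xs).append_left zs)
    have hcy := mul_mem_mul (ih hperm hcx) (mem_span_singleton_self (y ^ s))
    refine add_mem (mem_sup_left (mem_sup_left hw)) ?_
    refine SetLike.le_def.mp ?_ hcy
    rw [ofList_append, ofList_singleton, Ideal.sup_mul, Ideal.sup_mul, Ideal.sup_mul,
      span_singleton_mul_span_singleton, span_singleton_mul_span_singleton, List.prod_append,
      List.prod_singleton, mul_pow]
    refine sup_le_sup_right ?_ _
    rw [sup_right_comm _ (span _)]
    exact sup_le_sup_right (sup_le_sup Ideal.mul_le_left Ideal.mul_le_left) _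

theorem colon_ofList_map_pow {xs : List R} (h : IsRegular R xs) (s : ℕ) :
    (ofList (xs.map (· ^ (s + 1)))).colon (ofList xs) =
      span {xs.prod ^ s} ⊔ ofList (xs.map (· ^ (s + 1))) := by
  rw [colon_span]
  refine le_antisymm (fun u hu => ?_) (sup_le ?_ le_colon)
  · rw [Submodule.mem_colon] at hu
    have := mem_sup_span_prod_pow_of_forall_mul_mem s (zs := []) h (fun x hx => by
      rw [ofList_nil, bot_sup_eq]
      exact hu x hx)
    rwa [ofList_nil, bot_sup_eq, sup_comm] at this
  · rw [span_singleton_le_iff_mem, Submodule.mem_colon]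
    intro x hx
    obtain ⟨k, hk⟩ := List.dvd_prod hx
    rw [hk, smul_eq_mul, mul_pow, mul_right_comm, ← pow_succ]
    exact mul_mem_right _ _ (subset_span (List.mem_map_of_mem hx))

end

theorem stmt_16_general {R : Type*} [CommRing R] [IsLocalRing R] [IsNoetherianRing R]
    (p : ℕ) (hp : p.Prime) [CharP R p]
    (g : List R) (hg : RingTheory.Sequence.IsRegular R g)
    (I : Ideal R) (hI : I = Ideal.span {x | x ∈ g}) (e : ℕ) :
    (fpow (p ^ e) I).colon I = Ideal.span {g.prod ^ (p ^ e - 1)} ⊔ fpow (p ^ e) I := by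
  subst hI
  have : ExpChar R p := .prime hp
  obtain ⟨s, hs⟩ := Nat.exists_eq_add_one_of_ne_zero (pow_ne_zero e hp.ne_zero)
  rw [fpow_ofList, hs, Nat.add_sub_cancel, colon_ofList_map_pow hg]

theorem stmt_16 {R : Type*} [CommRing R] [IsLocalRing R] [IsNoetherianRing R]
    (p : ℕ) (hp : p.Prime) [CharP R p]
    -- `R` is complete:
    [IsAdicComplete (IsLocalRing.maximalIdeal R) R]
    -- `R` is regular:
    (hregular : ∃ rs : List R, RingTheory.Sequence.IsRegular R rs ∧
      Ideal.span {x | x ∈ rs} = IsLocalRing.maximalIdeal R)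
    (g : List R) (hg : RingTheory.Sequence.IsRegular R g)
    (I : Ideal R) (hI : I = Ideal.span {x | x ∈ g}) (e : ℕ) :
    (fpow (p ^ e) I).colon I = Ideal.span {g.prod ^ (p ^ e - 1)} ⊔ fpow (p ^ e) I :=
  stmt_16_general p hp g hg I hI e
end

section
/- Let R be a regular ring of characteristic p, u ∈ R, and for an ideal J ⊆ R containing a fixed ideal I with uI ⊆ I^[p], let J^{★u} denote the smallest ideal L ⊇ J with u·L ⊆ L^[p]. Then J^{★u} exists whenever the I_1(−) operation exists on R, and it is given by the stable value of the ascending chain J_0 = J, J_{n+1} = J_n + I_1(u·J_n). -/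
/-!
Since `u L ⊆ L^[p]` iff `I₁(u L) ⊆ L`, the ideal `J^{★u}` is the least ideal above `J` that is a
prefixed point of the monotone map `g L = I₁(u L)`. The chain `J_{n+1} = J_n ⊔ g J_n` is ascending,
so it stabilizes by Noetherianity; its stable value is a prefixed point above `J`, and by
induction every chain member lies below any such prefixed point.
-/

section SupChain

variable {α : Type*} [SemilatticeSup α] {g : α → α} {c : ℕ → α}

theorem monotone_of_eq_sup (hc : ∀ n, c (n + 1) = c n ⊔ g (c n)) : Monotone c :=
  monotone_nat_of_le_succ fun n => (hc n).ge.trans' le_sup_left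

theorem le_of_eq_sup (hg : Monotone g) (hc : ∀ n, c (n + 1) = c n ⊔ g (c n)) {L : α}
    (h0 : c 0 ≤ L) (hL : g L ≤ L) (n : ℕ) : c n ≤ L := by
  induction n with
  | zero => exact h0
  | succ n ih => exact (hc n).le.trans (sup_le ih ((hg ih).trans hL))

theorem exists_stabilizes_isLeast_of_eq_sup [WellFoundedGT α] (hg : Monotone g)
    (hc : ∀ n, c (n + 1) = c n ⊔ g (c n)) :
    ∃ N, (∀ n, N ≤ n → c n = c N) ∧ IsLeast {L | c 0 ≤ L ∧ g L ≤ L} (c N) := by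
  have hmono := monotone_of_eq_sup hc
  obtain ⟨N, hN⟩ := WellFoundedGT.monotone_chain_condition ⟨c, hmono⟩
  have hfix : g (c N) ≤ c N :=
    calc g (c N) ≤ c (N + 1) := (hc N).ge.trans' le_sup_right
      _ = c N := (hN (N + 1) N.le_succ).symm
  exact ⟨N, fun n hn => (hN n hn).symm, ⟨hmono N.zero_le, hfix⟩,
    fun L ⟨h0, hL⟩ => le_of_eq_sup hg hc h0 hL N⟩

end SupChain

theorem fpow_mono {R : Type*} [CommRing R] (q : ℕ) : Monotone (fpow (R := R) q) :=
  fun _ _ h => Ideal.span_mono (Set.image_mono h)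

theorem galoisConnection_of_le_fpow {R : Type*} [CommRing R] {q : ℕ} {I₁ : Ideal R → Ideal R}
    (hI₁ : ∀ A : Ideal R, A ≤ fpow q (I₁ A))
    (hI₁min : ∀ A L : Ideal R, A ≤ fpow q L → I₁ A ≤ L) :
    GaloisConnection I₁ (fpow q) :=
  fun A L => ⟨fun h => (hI₁ A).trans (fpow_mono q h), hI₁min A L⟩

theorem stmt_17_general {R : Type*} [CommRing R] [IsNoetherianRing R]
    (p : ℕ)
    -- the operation `I_1(-)`:
    (I₁ : Ideal R → Ideal R)
    (hI₁ : ∀ A : Ideal R, A ≤ fpow p (I₁ A))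
    (hI₁min : ∀ A L : Ideal R, A ≤ fpow p L → I₁ A ≤ L)
    (u : R) (J : Ideal R)
    -- the ascending chain `J₀ = J`, `J_{n+1} = J_n + I₁(u J_n)`:
    (c : ℕ → Ideal R) (hc0 : c 0 = J)
    (hcs : ∀ n : ℕ, c (n + 1) = c n ⊔ I₁ (Ideal.span {u} * c n)) :
    ∃ N : ℕ, (∀ n : ℕ, N ≤ n → c n = c N) ∧
      J ≤ c N ∧ (∀ x ∈ c N, u * x ∈ fpow p (c N)) ∧
      ∀ L : Ideal R, J ≤ L → (∀ x ∈ L, u * x ∈ fpow p L) → c N ≤ L := by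
  have gc := galoisConnection_of_le_fpow hI₁ hI₁min
  have hstable (L : Ideal R) : (∀ x ∈ L, u * x ∈ fpow p L) ↔ I₁ (Ideal.span {u} * L) ≤ L :=
    Ideal.span_singleton_mul_le_iff.symm.trans (gc _ _).symm
  have hg : Monotone fun L : Ideal R => I₁ (Ideal.span {u} * L) :=
    gc.monotone_l.comp fun _ _ h => Ideal.mul_mono_right h
  obtain ⟨N, hN, ⟨hJ, hfix⟩, hleast⟩ := exists_stabilizes_isLeast_of_eq_sup hg hcs
  subst hc0
  exact ⟨N, hN, hJ, (hstable _).2 hfix, fun L hJL hL => hleast ⟨hJL, (hstable L).1 hL⟩⟩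

theorem stmt_17 {R : Type*} [CommRing R] [IsNoetherianRing R]
    (p : ℕ) (hp : p.Prime) [CharP R p]
    -- the operation `I_1(-)`:
    (I₁ : Ideal R → Ideal R)
    (hI₁ : ∀ A : Ideal R, A ≤ fpow p (I₁ A))
    (hI₁min : ∀ A L : Ideal R, A ≤ fpow p L → I₁ A ≤ L)
    (u : R) (I J : Ideal R)
    (hI : ∀ x ∈ I, u * x ∈ fpow p I)
    (hIJ : I ≤ J)
    -- the ascending chain `J₀ = J`, `J_{n+1} = J_n + I₁(u J_n)`:
    (c : ℕ → Ideal R) (hc0 : c 0 = J)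
    (hcs : ∀ n : ℕ, c (n + 1) = c n ⊔ I₁ (Ideal.span {u} * c n)) :
    ∃ N : ℕ, (∀ n : ℕ, N ≤ n → c n = c N) ∧
      J ≤ c N ∧ (∀ x ∈ c N, u * x ∈ fpow p (c N)) ∧
      ∀ L : Ideal R, J ≤ L → (∀ x ∈ L, u * x ∈ fpow p L) → c N ≤ L :=
  stmt_17_general p I₁ hI₁ hI₁min u J c hc0 hcs
end
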